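/- arXiv:2410.17503 — 2 statements merged into one kernel-verified Lean document; each statement's English description precedes it below -/
import Mathlib

section
/- Fix a nonempty finite action set A. For every finite state set Ω, the share of environments (u_S, u_R) that are jointly-inclusive is at least 1 − |A| (1 − 1/|A|²)^{|Ω|}; consequently, as |Ω| → ∞ this share converges to 1. -/
open MeasureTheory

namespace KL

/-- `f` is a probability distribution on the finite type `X`. -/
def IsDist {X : Type} [Fintype X] (f : X → ℝ) : Prop :=
  (∀ x, 0 ≤ f x) ∧ ∑ x, f x = 1

/-- `μ₀` is an interior prior on `Ω`. -/
def IsPrior {Ω : Type} [Fintype Ω] (μ₀ : Ω → ℝ) : Prop :=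
  (∀ ω, 0 < μ₀ ω) ∧ ∑ ω, μ₀ ω = 1

variable {Ω A M : Type} [Fintype Ω] [Fintype A] [Fintype M]

/-- A messaging strategy: a distribution over messages in each state. -/
def IsMsg (σ : Ω → M → ℝ) : Prop := ∀ ω, IsDist (σ ω)

/-- An action strategy: a distribution over actions after each message. -/
def IsAct (ρ : M → A → ℝ) : Prop := ∀ m, IsDist (ρ m)

/-- Expected payoff of a profile `(σ, ρ)` for utility `u`. -/
def U (μ₀ : Ω → ℝ) (u : A × Ω → ℝ) (σ : Ω → M → ℝ) (ρ : M → A → ℝ) : ℝ :=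
  ∑ ω, ∑ m, ∑ a, μ₀ ω * σ ω m * ρ m a * u (a, ω)

/-- Sender best response. -/
def SBR (μ₀ : Ω → ℝ) (uS : A × Ω → ℝ) (σ : Ω → M → ℝ) (ρ : M → A → ℝ) : Prop :=
  ∀ σ' : Ω → M → ℝ, IsMsg σ' → U μ₀ uS σ' ρ ≤ U μ₀ uS σ ρ

/-- Receiver best response. -/
def RBR (μ₀ : Ω → ℝ) (uR : A × Ω → ℝ) (σ : Ω → M → ℝ) (ρ : M → A → ℝ) : Prop :=
  ∀ ρ' : M → A → ℝ, IsAct ρ' → U μ₀ uR σ ρ' ≤ U μ₀ uR σ ρ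

/-- A cheap-talk equilibrium: a profile of valid strategies that is S-BR and R-BR. -/
def CTEq (μ₀ : Ω → ℝ) (uS uR : A × Ω → ℝ) (σ : Ω → M → ℝ) (ρ : M → A → ℝ) : Prop :=
  IsMsg σ ∧ IsAct ρ ∧ SBR μ₀ uS σ ρ ∧ RBR μ₀ uR σ ρ

/-- A persuasion profile: a profile of valid strategies that is R-BR. -/
def PersProfile (μ₀ : Ω → ℝ) (uR : A × Ω → ℝ) (σ : Ω → M → ℝ) (ρ : M → A → ℝ) : Prop :=
  IsMsg σ ∧ IsAct ρ ∧ RBR μ₀ uR σ ρ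

/-- The cheap-talk payoff: the maximal Sender payoff over cheap-talk equilibria. -/
noncomputable def ctPayoff (μ₀ : Ω → ℝ) (uS uR : A × Ω → ℝ) : ℝ :=
  sSup {x | ∃ (σ : Ω → M → ℝ) (ρ : M → A → ℝ), CTEq μ₀ uS uR σ ρ ∧ x = U μ₀ uS σ ρ}

/-- The (Bayesian) persuasion payoff: the maximal Sender payoff over persuasion profiles. -/
noncomputable def persPayoff (μ₀ : Ω → ℝ) (uS uR : A × Ω → ℝ) : ℝ :=
  sSup {x | ∃ (σ : Ω → M → ℝ) (ρ : M → A → ℝ), PersProfile μ₀ uR σ ρ ∧ x = U μ₀ uS σ ρ}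

/-- A messaging strategy is partitional if it is deterministic in every state. -/
def Partitional (σ : Ω → M → ℝ) : Prop := ∀ ω, ∃ m, σ ω m = 1

/-- The partitional persuasion payoff. -/
noncomputable def partPersPayoff (μ₀ : Ω → ℝ) (uS uR : A × Ω → ℝ) : ℝ :=
  sSup {x | ∃ (σ : Ω → M → ℝ) (ρ : M → A → ℝ),
    Partitional σ ∧ PersProfile μ₀ uR σ ρ ∧ x = U μ₀ uS σ ρ}

/-- The partitional cheap-talk payoff. -/
noncomputable def partCtPayoff (μ₀ : Ω → ℝ) (uS uR : A × Ω → ℝ) : ℝ :=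
  sSup {x | ∃ (σ : Ω → M → ℝ) (ρ : M → A → ℝ),
    Partitional σ ∧ CTEq μ₀ uS uR σ ρ ∧ x = U μ₀ uS σ ρ}

/-- A message is on-path if it is sent with positive probability in some state. -/
def OnPath (σ : Ω → M → ℝ) (m : M) : Prop := ∃ ω, 0 < σ ω m

/-- A pure action strategy: degenerate after every message. -/
def IsPureAct (ρ : M → A → ℝ) : Prop := ∀ m, ∃ a, ρ m a = 1

/-- A pure-on-path action strategy: degenerate after every on-path message. -/
def PureOnPath (σ : Ω → M → ℝ) (ρ : M → A → ℝ) : Prop :=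
  ∀ m, OnPath σ m → ∃ a, ρ m a = 1

/-- The posterior belief induced by message `m`. -/
noncomputable def post (μ₀ : Ω → ℝ) (σ : Ω → M → ℝ) (m : M) (ω : Ω) : ℝ :=
  μ₀ ω * σ ω m / ∑ ω', μ₀ ω' * σ ω' m

/-- The cube of environments `[0,1]^(2|A||Ω|)`. -/
def EnvCube (Ω A : Type) : Set ((A × Ω → ℝ) × (A × Ω → ℝ)) :=
  {e | (∀ p, e.1 p ∈ Set.Icc (0 : ℝ) 1) ∧ ∀ p, e.2 p ∈ Set.Icc (0 : ℝ) 1}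

/-- The cube of transparent environments `[0,1]^(|A|(|Ω|+1))`, points `(v, u_R)`. -/
def TransCube (Ω A : Type) : Set ((A → ℝ) × (A × Ω → ℝ)) :=
  {e | (∀ a, e.1 a ∈ Set.Icc (0 : ℝ) 1) ∧ ∀ p, e.2 p ∈ Set.Icc (0 : ℝ) 1}

open Classical in
/-- The expanded-indifference matrix `T^i`: rows `u_S(a_j,·) − u_S(a_i,·)` for `j ≠ i`,
rows `u_R(a_j,·) − u_R(a_i,·)` for `j ≠ i`, and the rows of the identity matrix. -/
noncomputable def TMat (uS uR : A × Ω → ℝ) (i : A) :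
    Matrix (({j : A // j ≠ i} ⊕ {j : A // j ≠ i}) ⊕ Ω) Ω ℝ :=
  Matrix.of fun r ω =>
    match r with
    | Sum.inl (Sum.inl j) => uS (j.1, ω) - uS (i, ω)
    | Sum.inl (Sum.inr j) => uR (j.1, ω) - uR (i, ω)
    | Sum.inr ω' => if ω' = ω then 1 else 0

/-- Scant indifferences: every row-submatrix of every expanded-indifference matrix has
full rank (rank equal to the minimum of the number of rows and the number of columns). -/
def ScantIndiff (uS uR : A × Ω → ℝ) : Prop :=
  ∀ i : A, ∀ s : Finset (({j : A // j ≠ i} ⊕ {j : A // j ≠ i}) ⊕ Ω),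
    ((TMat uS uR i).submatrix (fun r : {x // x ∈ s} => r.1) id).rank
      = min s.card (Fintype.card Ω)

open Classical in
/-- The set `Ω_a` of states in which `a` is an ideal action for Sender. -/
noncomputable def idealStates (uS : A × Ω → ℝ) (a : A) : Finset Ω :=
  Finset.univ.filter fun ω => ∀ b, uS (b, ω) ≤ uS (a, ω)

/-- Felicitous environment. -/
def Felicitous (μ₀ : Ω → ℝ) (uS uR : A × Ω → ℝ) : Prop :=
  ∀ a a' : A, 0 ≤ ∑ ω ∈ idealStates uS a, μ₀ ω * (uR (a, ω) - uR (a', ω))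

/-- Partitional-unique-response: for every nonempty subset of states, Receiver's
expected payoff has a unique maximizer. -/
def PUR (μ₀ : Ω → ℝ) (uR : A × Ω → ℝ) : Prop :=
  ∀ S : Finset Ω, S.Nonempty →
    ∃! a : A, ∀ b : A, ∑ ω ∈ S, μ₀ ω * uR (b, ω) ≤ ∑ ω ∈ S, μ₀ ω * uR (a, ω)

/-- Jointly-inclusive environment: each action is the unique ideal action of both
players in some state. -/
def JointlyInclusive (uS uR : A × Ω → ℝ) : Prop :=
  ∀ a : A, ∃ ω : Ω,
    (∀ b, b ≠ a → uS (b, ω) < uS (a, ω)) ∧ ∀ b, b ≠ a → uR (b, ω) < uR (a, ω)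

/-!
Fix an action `a`. In each state `ω` the vectors `u_S(·, ω)` and `u_R(·, ω)` are independent and
uniformly distributed on the unit cube. Ties have measure zero and the coordinates are
exchangeable, so `a` is the strict maximizer of each vector with probability at least `1/|A|`,
hence of both with probability at least `1/|A|²`. The states are independent, so `a` is the unique
joint ideal action in no state with probability at most `(1 - 1/|A|²)^|Ω|`, and a union bound over
the actions gives the estimate.
-/

open Set Filter Topology
open scoped ENNReal

section Slices

variable {ι κ X : Type*} [Fintype ι] [Fintype κ] [MeasurableSpace X]
  (μ : ι × κ → Measure X) [∀ p, SigmaFinite (μ p)]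

theorem measurePreserving_uncurry_swap :
    MeasurePreserving (fun (g : κ → ι → X) (p : ι × κ) => g p.2 p.1)
      (Measure.pi fun k => Measure.pi fun i => μ (i, k)) (Measure.pi μ) := by
  refine ⟨by fun_prop, (Measure.pi_eq fun s hs => ?_).symm⟩
  rw [Measure.map_apply (by fun_prop) (.univ_pi hs)]
  have : (fun (g : κ → ι → X) (p : ι × κ) => g p.2 p.1) ⁻¹' univ.pi s
      = univ.pi fun k => univ.pi fun i => s (i, k) := by
    ext g; simp [Prod.forall, forall_comm (α := ι)]
  rw [this, Measure.pi_pi]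
  simp_rw [Measure.pi_pi]
  rw [Fintype.prod_prod_type_right]

theorem measure_pi_setOf_forall_slice_mem (S : κ → Set (ι → X))
    (hS : ∀ k, MeasurableSet (S k)) :
    Measure.pi μ {f | ∀ k, (fun i => f (i, k)) ∈ S k}
      = ∏ k, Measure.pi (fun i => μ (i, k)) (S k) := by
  have hmeas : MeasurableSet {f : ι × κ → X | ∀ k, (fun i => f (i, k)) ∈ S k} := by
    simp only [ofPred_forall]
    exact .iInter fun k => (hS k).preimage (by fun_prop)
  rw [← (measurePreserving_uncurry_swap μ).measure_preimage hmeas.nullMeasurableSet,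
    ← Measure.pi_pi]
  congr 1
  ext g
  simp

end Slices

section Argmax

variable {ι : Type*}

def unitCube (ι : Type*) : Set (ι → ℝ) := univ.pi fun _ => Icc 0 1

def uniqueArgmax (a : ι) : Set (ι → ℝ) := {f | ∀ b, b ≠ a → f b < f a}

theorem comp_mem_uniqueArgmax_iff (σ : Equiv.Perm ι) (a : ι) (f : ι → ℝ) :
    f ∘ σ ∈ uniqueArgmax a ↔ f ∈ uniqueArgmax (σ a) := by
  simp only [uniqueArgmax, mem_ofPred_eq, Function.comp_apply]
  rw [σ.forall_congr_left]
  simp [Equiv.symm_apply_eq]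

theorem comp_mem_unitCube_iff (σ : Equiv.Perm ι) (f : ι → ℝ) :
    f ∘ σ ∈ unitCube ι ↔ f ∈ unitCube ι := by
  simp only [unitCube, mem_univ_pi, Function.comp_apply]
  exact σ.forall_congr_right (q := fun i => f i ∈ Icc 0 1)

variable [Fintype ι]

theorem measurableSet_unitCube : MeasurableSet (unitCube ι) :=
  .univ_pi fun _ => measurableSet_Icc

theorem volume_unitCube : volume (unitCube ι) = 1 := by
  rw [unitCube, volume_pi_pi]
  simp

theorem measurableSet_uniqueArgmax (a : ι) : MeasurableSet (uniqueArgmax a : Set (ι → ℝ)) := by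
  simp only [uniqueArgmax, ofPred_forall]
  exact .iInter fun b => .iInter fun _ => measurableSet_lt (by fun_prop) (by fun_prop)

theorem ae_apply_ne_apply {a b : ι} (hab : a ≠ b) : ∀ᵐ f : ι → ℝ, f a ≠ f b := by
  classical
  rw [ae_iff]
  refine measure_mono_null (fun f hf => ?_) (Measure.addHaar_submodule volume
    (LinearMap.ker (LinearMap.proj (R := ℝ) (φ := fun _ : ι => ℝ) a - LinearMap.proj b)) ?_)
  · simpa [sub_eq_zero] using hf
  · rw [Ne, LinearMap.ker_eq_top]
    intro h
    simpa [hab.symm] using LinearMap.congr_fun h (Pi.single a 1)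

theorem ae_injective : ∀ᵐ f : ι → ℝ, Function.Injective f := by
  have : ∀ᵐ f : ι → ℝ, ∀ a b, a ≠ b → f a ≠ f b := by
    refine eventually_all.2 fun a => eventually_all.2 fun b => ?_
    rcases eq_or_ne a b with rfl | hab
    · exact .of_forall fun _ h => (h rfl).elim
    · exact (ae_apply_ne_apply hab).mono fun _ h _ => h
  filter_upwards [this] with f hf a b using not_imp_not.1 (hf a b)

theorem volume_unitCube_inter_uniqueArgmax_eq (a b : ι) :
    volume (unitCube ι ∩ uniqueArgmax a) = volume (unitCube ι ∩ uniqueArgmax b) := by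
  classical
  have h := (volume_measurePreserving_piCongrLeft (fun _ : ι => ℝ) (Equiv.swap a b)).symm
  rw [← h.measure_preimage_equiv]
  congr 1
  ext f
  have hσ : (MeasurableEquiv.piCongrLeft (fun _ : ι => ℝ) (Equiv.swap a b)).symm f
      = f ∘ Equiv.swap a b := rfl
  simp only [mem_preimage, hσ, mem_inter_iff, comp_mem_unitCube_iff, comp_mem_uniqueArgmax_iff,
    Equiv.swap_apply_left]

theorem unitCube_ae_le_iUnion [Nonempty ι] :
    unitCube ι ≤ᵐ[volume] ⋃ a, unitCube ι ∩ uniqueArgmax a := by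
  filter_upwards [ae_injective] with f hf hcube
  obtain ⟨a, ha⟩ := Finite.exists_max f
  exact mem_iUnion.2 ⟨a, hcube, fun b hb => (ha b).lt_of_ne (hf.ne hb)⟩

theorem inv_card_le_volume_unitCube_inter_uniqueArgmax (a : ι) :
    (Fintype.card ι : ℝ≥0∞)⁻¹ ≤ volume (unitCube ι ∩ uniqueArgmax a) := by
  have : Nonempty ι := ⟨a⟩
  have : 1 ≤ Fintype.card ι * volume (unitCube ι ∩ uniqueArgmax a) := calc
    1 = volume (unitCube ι) := volume_unitCube.symm
    _ ≤ volume (⋃ b, unitCube ι ∩ uniqueArgmax b) := measure_mono_ae unitCube_ae_le_iUnion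
    _ ≤ ∑ b, volume (unitCube ι ∩ uniqueArgmax b) := measure_iUnion_fintype_le _ _
    _ = Fintype.card ι * volume (unitCube ι ∩ uniqueArgmax a) := by
      simp [volume_unitCube_inter_uniqueArgmax_eq _ a]
  exact (ENNReal.inv_le_iff_le_mul (fun _ => by simp) (fun h => by simp at h)).2 this

theorem volume_unitCube_prod_diff_le (a : ι) :
    volume ((unitCube ι ×ˢ unitCube ι) \
        ((unitCube ι ∩ uniqueArgmax a) ×ˢ (unitCube ι ∩ uniqueArgmax a)))
      ≤ ENNReal.ofReal (1 - 1 / (Fintype.card ι : ℝ) ^ 2) := by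
  set D := unitCube ι ∩ uniqueArgmax a
  have hD : MeasurableSet D := measurableSet_unitCube.inter (measurableSet_uniqueArgmax a)
  have hDfin : volume D ≠ ∞ :=
    ne_top_of_le_ne_top (by simp [volume_unitCube]) (measure_mono inter_subset_left)
  have hn : (0 : ℝ) < Fintype.card ι := Nat.cast_pos.2 (Fintype.card_pos_iff.2 ⟨a⟩)
  have hbound : ENNReal.ofReal (1 - 1 / (Fintype.card ι : ℝ) ^ 2)
      = 1 - ((Fintype.card ι : ℝ≥0∞)⁻¹) ^ 2 := by
    rw [ENNReal.ofReal_sub _ (by positivity), ENNReal.ofReal_one, one_div, ← inv_pow,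
      ENNReal.ofReal_pow (by positivity), ENNReal.ofReal_inv_of_pos hn, ENNReal.ofReal_natCast]
  rw [measure_sdiff (prod_mono inter_subset_left inter_subset_left) (hD.prod hD).nullMeasurableSet
      (by rw [Measure.volume_eq_prod, Measure.prod_prod]; exact ENNReal.mul_ne_top hDfin hDfin),
    Measure.volume_eq_prod, Measure.prod_prod, Measure.prod_prod, volume_unitCube, one_mul, ← sq,
    hbound]
  exact tsub_le_tsub_left (pow_le_pow_left' (inv_card_le_volume_unitCube_inter_uniqueArgmax a) 2) 1

end Argmax

theorem one_sub_one_div_natCast_sq_nonneg (n : ℕ) : (0 : ℝ) ≤ 1 - 1 / (n : ℝ) ^ 2 := by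
  rw [sub_nonneg, one_div, ← Nat.cast_pow]
  exact Nat.cast_inv_le_one _

section Environments

theorem volume_envCube : volume (EnvCube Ω A) = 1 := by
  have : EnvCube Ω A = unitCube (A × Ω) ×ˢ unitCube (A × Ω) := by
    ext e
    simp only [EnvCube, unitCube, mem_ofPred_eq, mem_prod, mem_univ_pi]
  rw [this, Measure.volume_eq_prod, Measure.prod_prod, volume_unitCube, one_mul]

theorem volume_envCube_inter_le_one (s : Set ((A × Ω → ℝ) × (A × Ω → ℝ))) :
    volume (EnvCube Ω A ∩ s) ≤ 1 :=
  volume_envCube (Ω := Ω) (A := A) ▸ measure_mono inter_subset_left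

def IsUniqueJointIdeal (uS uR : A × Ω → ℝ) (a : A) (ω : Ω) : Prop :=
  (∀ b, b ≠ a → uS (b, ω) < uS (a, ω)) ∧ ∀ b, b ≠ a → uR (b, ω) < uR (a, ω)

theorem volume_setOf_forall_not_isUniqueJointIdeal_le (a : A) :
    volume {e ∈ EnvCube Ω A | ∀ ω, ¬IsUniqueJointIdeal e.1 e.2 a ω}
      ≤ ENNReal.ofReal ((1 - 1 / (Fintype.card A : ℝ) ^ 2) ^ Fintype.card Ω) := by
  set S := (unitCube A ×ˢ unitCube A) \
    ((unitCube A ∩ uniqueArgmax a) ×ˢ (unitCube A ∩ uniqueArgmax a))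
  have hS : MeasurableSet S := by
    have hD := measurableSet_unitCube.inter (measurableSet_uniqueArgmax a)
    exact (measurableSet_unitCube.prod measurableSet_unitCube).diff (hD.prod hD)
  have hA := volume_measurePreserving_arrowProdEquivProdArrow ℝ ℝ A
  have hAΩ := volume_measurePreserving_arrowProdEquivProdArrow ℝ ℝ (A × Ω)
  -- regroup an environment state by state, as the pairs `(u_S(·, ω), u_R(·, ω))`
  have hpre : MeasurableEquiv.arrowProdEquivProdArrow ℝ ℝ (A × Ω) ⁻¹'
      {e ∈ EnvCube Ω A | ∀ ω, ¬IsUniqueJointIdeal e.1 e.2 a ω}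
      = {h | ∀ ω, (fun i => h (i, ω)) ∈ MeasurableEquiv.arrowProdEquivProdArrow ℝ ℝ A ⁻¹' S} := by
    ext h
    constructor
    · rintro ⟨⟨hc₁, hc₂⟩, hnot⟩ ω
      exact ⟨⟨fun i _ => hc₁ (i, ω), fun i _ => hc₂ (i, ω)⟩,
        fun ⟨⟨_, h₁⟩, _, h₂⟩ => hnot ω ⟨h₁, h₂⟩⟩
    · intro hslice
      exact ⟨⟨fun p => (hslice p.2).1.1 p.1 trivial, fun p => (hslice p.2).1.2 p.1 trivial⟩,
        fun ω hω => (hslice ω).2 ⟨⟨(hslice ω).1.1, hω.1⟩, (hslice ω).1.2, hω.2⟩⟩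
  rw [← hAΩ.measure_preimage_equiv, hpre, volume_pi,
    measure_pi_setOf_forall_slice_mem _ _ fun _ => hS.preimage (MeasurableEquiv.measurable _)]
  simp_rw [← volume_pi, hA.measure_preimage_equiv]
  rw [Finset.prod_const, Finset.card_univ, ENNReal.ofReal_pow (one_sub_one_div_natCast_sq_nonneg _)]
  exact pow_le_pow_left' (volume_unitCube_prod_diff_le a) _

theorem one_le_volume_jointlyInclusive_add :
    1 ≤ volume (EnvCube Ω A ∩ {e | JointlyInclusive e.1 e.2}) +
      ENNReal.ofReal (Fintype.card A * (1 - 1 / (Fintype.card A : ℝ) ^ 2) ^ Fintype.card Ω) := by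
  have hcover : EnvCube Ω A ⊆ (EnvCube Ω A ∩ {e | JointlyInclusive e.1 e.2}) ∪
      ⋃ a, {e ∈ EnvCube Ω A | ∀ ω, ¬IsUniqueJointIdeal e.1 e.2 a ω} := by
    intro e he
    by_cases hJ : JointlyInclusive e.1 e.2
    · exact Or.inl ⟨he, hJ⟩
    · obtain ⟨a, ha⟩ := not_forall.1 hJ
      exact Or.inr (mem_iUnion.2 ⟨a, he, fun ω hω => ha ⟨ω, hω⟩⟩)
  calc 1 = volume (EnvCube Ω A) := volume_envCube.symm
    _ ≤ volume (EnvCube Ω A ∩ {e | JointlyInclusive e.1 e.2}) +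
          ∑ a, volume {e ∈ EnvCube Ω A | ∀ ω, ¬IsUniqueJointIdeal e.1 e.2 a ω} :=
        (measure_mono hcover).trans <| (measure_union_le _ _).trans <|
          add_le_add_right (measure_iUnion_fintype_le _ _) _
    _ ≤ _ := by
        grw [Finset.sum_le_sum fun a _ => volume_setOf_forall_not_isUniqueJointIdeal_le a]
        rw [Finset.sum_const, Finset.card_univ, nsmul_eq_mul, ← ENNReal.ofReal_natCast,
          ← ENNReal.ofReal_mul (Nat.cast_nonneg _)]

theorem one_sub_le_volume_jointlyInclusive :
    1 - Fintype.card A * (1 - 1 / (Fintype.card A : ℝ) ^ 2) ^ Fintype.card Ω ≤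
      (volume (EnvCube Ω A ∩ {e | JointlyInclusive e.1 e.2})).toReal := by
  have hfin := (volume_envCube_inter_le_one {e : (A × Ω → ℝ) × (A × Ω → ℝ) |
    JointlyInclusive e.1 e.2}).trans_lt ENNReal.one_lt_top
  have h := ENNReal.toReal_mono (by finiteness) one_le_volume_jointlyInclusive_add
  rw [ENNReal.toReal_add hfin.ne ENNReal.ofReal_ne_top, ENNReal.toReal_ofReal <|
    mul_nonneg (Nat.cast_nonneg _) (pow_nonneg (one_sub_one_div_natCast_sq_nonneg _) _)] at h
  simp only [ENNReal.toReal_one] at h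
  linarith

end Environments

theorem tendsto_natCast_mul_one_sub_one_div_sq_pow (n : ℕ) :
    Tendsto (fun k : ℕ => (n : ℝ) * (1 - 1 / (n : ℝ) ^ 2) ^ k) atTop (𝓝 0) := by
  rcases n.eq_zero_or_pos with rfl | hn
  · simp
  · have hlt : 1 - 1 / (n : ℝ) ^ 2 < 1 := sub_lt_self _ (by positivity)
    simpa using (tendsto_pow_atTop_nhds_zero_of_lt_one
      (one_sub_one_div_natCast_sq_nonneg n) hlt).const_mul (n : ℝ)

theorem share_jointly_inclusive_general
    (A : Type) [Fintype A] :
    (∀ (Ω : Type) [Fintype Ω] [Nonempty Ω],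
      1 - (Fintype.card A : ℝ) *
          (1 - 1 / (Fintype.card A : ℝ) ^ 2) ^ Fintype.card Ω ≤
        (volume (EnvCube Ω A ∩ {e | JointlyInclusive e.1 e.2})).toReal) ∧
    ∀ ε : ℝ, 0 < ε → ∃ N : ℕ,
      ∀ (Ω : Type) [Fintype Ω] [Nonempty Ω], N ≤ Fintype.card Ω →
        |(volume (EnvCube Ω A ∩ {e | JointlyInclusive e.1 e.2})).toReal - 1| ≤ ε := by
  refine ⟨fun Ω _ _ => one_sub_le_volume_jointlyInclusive, fun ε hε => ?_⟩
  obtain ⟨N, hN⟩ := eventually_atTop.1 <|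
    (tendsto_natCast_mul_one_sub_one_div_sq_pow (Fintype.card A)).eventually (ge_mem_nhds hε)
  refine ⟨N, fun Ω _ _ hΩ => ?_⟩
  have hlower := one_sub_le_volume_jointlyInclusive (Ω := Ω) (A := A)
  have hupper := ENNReal.toReal_le_of_le_ofReal zero_le_one <| ENNReal.ofReal_one ▸
    volume_envCube_inter_le_one (Ω := Ω) (A := A) {e | JointlyInclusive e.1 e.2}
  rw [abs_sub_comm, abs_of_nonneg (sub_nonneg.2 hupper)]
  linarith [hN _ hΩ]

/-- Lemma (Kamenica–Lin): the share of jointly-inclusive environments is at least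
`1 − |A|(1 − 1/|A|²)^{|Ω|}`; consequently, it converges to 1 as `|Ω| → ∞`. -/
theorem share_jointly_inclusive
    (A : Type) [Fintype A] [Nonempty A] :
    (∀ (Ω : Type) [Fintype Ω] [Nonempty Ω],
      1 - (Fintype.card A : ℝ) *
          (1 - 1 / (Fintype.card A : ℝ) ^ 2) ^ Fintype.card Ω ≤
        (volume (EnvCube Ω A ∩ {e | JointlyInclusive e.1 e.2})).toReal) ∧
    ∀ ε : ℝ, 0 < ε → ∃ N : ℕ,
      ∀ (Ω : Type) [Fintype Ω] [Nonempty Ω], N ≤ Fintype.card Ω →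
        |(volume (EnvCube Ω A ∩ {e | JointlyInclusive e.1 e.2})).toReal - 1| ≤ ε :=
  share_jointly_inclusive_general A

end KL
end

section
/- Fix nonempty finite sets Ω and A, a finite message set M with |M| > max{|Ω|, |A|}, and an interior prior μ₀ on Ω. Suppose the environment (u_S, u_R) is transparent with value function v and satisfies no-duplicate-actions. If commitment has no value, then there exists a simple babbling cheap-talk equilibrium whose Sender payoff equals the persuasion payoff. -/
open MeasureTheory

namespace KL

variable {Ω A M : Type} [Fintype Ω] [Fintype A] [Fintype M]

section Aux

omit [Fintype Ω] in
lemma delta_isDist {X : Type} [Fintype X] [DecidableEq X] (x₀ : X) :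
    IsDist (fun x => if x = x₀ then (1:ℝ) else 0) := by
  constructor
  · intro x; by_cases h : x = x₀ <;> simp [h]
  · simp

lemma dist_eq_zero_of_ne {X : Type} [Fintype X] {f : X → ℝ} (hf : IsDist f)
    {x₀ : X} (h1 : f x₀ = 1) {x : X} (hx : x ≠ x₀) : f x = 0 := by
  classical
  have h := hf.2
  rw [← Finset.add_sum_erase _ f (Finset.mem_univ x₀)] at h
  have h0 : ∑ y ∈ Finset.univ.erase x₀, f y = 0 := by linarith
  exact (Finset.sum_eq_zero_iff_of_nonneg (fun i _ => hf.1 i)).mp h0 x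
    (Finset.mem_erase.mpr ⟨hx, Finset.mem_univ x⟩)

lemma U_msg_form (μ₀ : Ω → ℝ) (uS : A × Ω → ℝ) (v : A → ℝ)
    (htrans : ∀ a ω, uS (a, ω) = v a) (σ : Ω → M → ℝ) (ρ : M → A → ℝ) :
    U μ₀ uS σ ρ = ∑ m, (∑ ω, μ₀ ω * σ ω m) * (∑ a, ρ m a * v a) := by
  unfold U
  rw [Finset.sum_comm]
  refine Finset.sum_congr rfl fun m _ => ?_
  rw [Finset.sum_mul]
  refine Finset.sum_congr rfl fun ω _ => ?_
  rw [Finset.mul_sum]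
  refine Finset.sum_congr rfl fun a _ => ?_
  rw [htrans]; ring

lemma U_g_form (μ₀ : Ω → ℝ) (u : A × Ω → ℝ) (σ : Ω → M → ℝ) (ρ : M → A → ℝ) :
    U μ₀ u σ ρ = ∑ m, ∑ a, ρ m a * ∑ ω, μ₀ ω * σ ω m * u (a, ω) := by
  unfold U
  rw [Finset.sum_comm]
  refine Finset.sum_congr rfl fun m _ => ?_
  rw [Finset.sum_comm]
  refine Finset.sum_congr rfl fun a _ => ?_
  rw [Finset.mul_sum]
  refine Finset.sum_congr rfl fun ω _ => ?_
  ring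

lemma U_le_one (μ₀ : Ω → ℝ) (hμ : IsPrior μ₀) (u : A × Ω → ℝ)
    (hu : ∀ p, u p ∈ Set.Icc (0:ℝ) 1) {σ : Ω → M → ℝ} {ρ : M → A → ℝ}
    (hσ : IsMsg σ) (hρ : IsAct ρ) : U μ₀ u σ ρ ≤ 1 := by
  have key : U μ₀ u σ ρ ≤ ∑ ω, ∑ m, ∑ a, μ₀ ω * σ ω m * ρ m a := by
    unfold U
    refine Finset.sum_le_sum fun ω _ => Finset.sum_le_sum fun m _ =>
      Finset.sum_le_sum fun a _ => ?_
    have h0 : 0 ≤ μ₀ ω * σ ω m * ρ m a :=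
      mul_nonneg (mul_nonneg (hμ.1 ω).le ((hσ ω).1 m)) ((hρ m).1 a)
    exact mul_le_of_le_one_right h0 (hu _).2
  refine key.trans (le_of_eq ?_)
  have h1 : ∀ ω, ∑ m, ∑ a, μ₀ ω * σ ω m * ρ m a = μ₀ ω := by
    intro ω
    have h2 : ∀ m, ∑ a, μ₀ ω * σ ω m * ρ m a = μ₀ ω * σ ω m := by
      intro m; rw [← Finset.mul_sum, (hρ m).2, mul_one]
    rw [Finset.sum_congr rfl fun m _ => h2 m, ← Finset.mul_sum, (hσ ω).2, mul_one]
  rw [Finset.sum_congr rfl fun ω _ => h1 ω, hμ.2]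

lemma avg_eq_of_le {ι : Type} [Fintype ι] (c f : ι → ℝ) (P : ℝ)
    (hc0 : ∀ i, 0 ≤ c i) (hc1 : ∑ i, c i = 1) (hf : ∀ i, f i ≤ P)
    (hP : ∑ i, c i * f i = P) : ∀ i, 0 < c i → f i = P := by
  intro i hi
  have h0 : ∑ j, c j * (P - f j) = 0 := by
    simp only [mul_sub]
    rw [Finset.sum_sub_distrib, ← Finset.sum_mul, hc1, one_mul, hP, sub_self]
  have hz := (Finset.sum_eq_zero_iff_of_nonneg
    (fun j _ => mul_nonneg (hc0 j) (sub_nonneg.mpr (hf j)))).mp h0 i (Finset.mem_univ i)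
  have := sub_eq_zero.mp ((mul_eq_zero.mp hz).resolve_left (ne_of_gt hi))
  linarith

open Classical in
lemma U_update (μ₀ : Ω → ℝ) (u : A × Ω → ℝ) (σ : Ω → M → ℝ) (ρ : M → A → ℝ)
    (m : M) (d : A → ℝ) :
    U μ₀ u σ (Function.update ρ m d)
      = U μ₀ u σ ρ + ((∑ a, d a * ∑ ω, μ₀ ω * σ ω m * u (a, ω))
          - ∑ a, ρ m a * ∑ ω, μ₀ ω * σ ω m * u (a, ω)) := by
  rw [U_g_form, U_g_form]
  have h1 : ∀ m' : M, (∑ a, Function.update ρ m d m' a * ∑ ω, μ₀ ω * σ ω m' * u (a, ω))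
      = Function.update (fun m'' => ∑ a, ρ m'' a * ∑ ω, μ₀ ω * σ ω m'' * u (a, ω)) m
          (∑ a, d a * ∑ ω, μ₀ ω * σ ω m * u (a, ω)) m' := by
    intro m'
    by_cases h : m' = m
    · subst h; rw [Function.update_self, Function.update_self]
    · rw [Function.update_of_ne h, Function.update_of_ne h]
  rw [Finset.sum_congr rfl fun m' _ => h1 m',
    Finset.sum_update_of_mem (Finset.mem_univ m)]
  have h2 : ∑ m' ∈ Finset.univ \ {m},
        (∑ a, ρ m' a * ∑ ω, μ₀ ω * σ ω m' * u (a, ω))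
      = (∑ m', ∑ a, ρ m' a * ∑ ω, μ₀ ω * σ ω m' * u (a, ω))
          - ∑ a, ρ m a * ∑ ω, μ₀ ω * σ ω m * u (a, ω) := by
    rw [Finset.sum_sdiff_eq_sub (Finset.singleton_subset_iff.mpr (Finset.mem_univ m))]
    simp
  rw [h2]; ring

open Classical in
lemma U_const_msg (μ₀ : Ω → ℝ) (hμ : IsPrior μ₀) (uS : A × Ω → ℝ) (v : A → ℝ)
    (htrans : ∀ a ω, uS (a, ω) = v a) (ρ : M → A → ℝ) (m₀ : M) :
    U μ₀ uS (fun _ m => if m = m₀ then 1 else 0) ρ = ∑ a, ρ m₀ a * v a := by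
  rw [U_msg_form μ₀ uS v htrans]
  have h1 : ∀ m : M, (∑ ω, μ₀ ω * if m = m₀ then (1:ℝ) else 0) = if m = m₀ then 1 else 0 := by
    intro m; by_cases h : m = m₀ <;> simp [h, hμ.2]
  rw [Finset.sum_congr rfl fun m _ => by rw [h1 m]]
  simp [ite_mul]

open Classical in
lemma U_const_act (μ₀ : Ω → ℝ) (hμ : IsPrior μ₀) (uS : A × Ω → ℝ) (v : A → ℝ)
    (htrans : ∀ a ω, uS (a, ω) = v a) {σ : Ω → M → ℝ} (hσ : IsMsg σ) (a₀ : A) :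
    U μ₀ uS σ (fun _ a => if a = a₀ then 1 else 0) = v a₀ := by
  rw [U_msg_form μ₀ uS v htrans]
  have h1 : (∑ a, (if a = a₀ then (1:ℝ) else 0) * v a) = v a₀ := by simp [ite_mul]
  have h2 : ∑ m, (∑ ω, μ₀ ω * σ ω m) = 1 := by
    rw [Finset.sum_comm]
    have h3 : ∀ ω, ∑ m, μ₀ ω * σ ω m = μ₀ ω := fun ω => by
      rw [← Finset.mul_sum, (hσ ω).2, mul_one]
    rw [Finset.sum_congr rfl fun ω _ => h3 ω, hμ.2]
  rw [Finset.sum_congr rfl fun m _ => by rw [h1], ← Finset.sum_mul, h2, one_mul]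

open Classical in
lemma U_babbling_R (μ₀ : Ω → ℝ) (u : A × Ω → ℝ) (m₀ : M) (ρ : M → A → ℝ) :
    U μ₀ u (fun _ m => if m = m₀ then 1 else 0) ρ
      = ∑ a, ρ m₀ a * ∑ ω, μ₀ ω * u (a, ω) := by
  rw [U_g_form]
  have h1 : ∀ m : M, (∑ a, ρ m a * ∑ ω, μ₀ ω * (if m = m₀ then (1:ℝ) else 0) * u (a, ω))
      = if m = m₀ then ∑ a, ρ m a * ∑ ω, μ₀ ω * u (a, ω) else 0 := by
    intro m; by_cases h : m = m₀ <;> simp [h]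
  rw [Finset.sum_congr rfl fun m _ => h1 m, Finset.sum_ite_eq' Finset.univ m₀]
  simp

open Classical in
lemma babbling_profile (μ₀ : Ω → ℝ) (hμ : IsPrior μ₀) (uS uR : A × Ω → ℝ) (v : A → ℝ)
    (htrans : ∀ a ω, uS (a, ω) = v a) (a₀ : A)
    (ha₀ : ∀ b, ∑ ω, μ₀ ω * uR (b, ω) ≤ ∑ ω, μ₀ ω * uR (a₀, ω)) (m₀ : M) :
    CTEq μ₀ uS uR (fun _ m => if m = m₀ then 1 else 0) (fun _ a => if a = a₀ then 1 else 0)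
    ∧ U μ₀ uS (fun _ m => if m = m₀ then 1 else 0) (fun _ a => if a = a₀ then 1 else 0)
        = v a₀ := by
  have hσ : IsMsg (M := M) (fun _ : Ω => fun m => if m = m₀ then (1:ℝ) else 0) :=
    fun _ => delta_isDist m₀
  have hρ : IsAct (M := M) (fun _ : M => fun a : A => if a = a₀ then (1:ℝ) else 0) :=
    fun _ => delta_isDist a₀
  refine ⟨⟨hσ, hρ, ?_, ?_⟩, U_const_act μ₀ hμ uS v htrans hσ a₀⟩
  · intro σ' hσ'
    rw [U_const_act μ₀ hμ uS v htrans hσ' a₀, U_const_act μ₀ hμ uS v htrans hσ a₀]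
  · intro ρ' hρ'
    rw [U_babbling_R, U_babbling_R]
    have hle : ∑ a, ρ' m₀ a * ∑ ω, μ₀ ω * uR (a, ω)
        ≤ ∑ a, ρ' m₀ a * ∑ ω, μ₀ ω * uR (a₀, ω) := by
      refine Finset.sum_le_sum fun a _ => mul_le_mul_of_nonneg_left (ha₀ a) ((hρ' m₀).1 a)
    refine hle.trans (le_of_eq ?_)
    rw [← Finset.sum_mul, (hρ' m₀).2, one_mul]
    simp [ite_mul]

end Aux
section Compact

lemma continuous_U_full (μ₀ : Ω → ℝ) (u : A × Ω → ℝ) :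
    Continuous fun p : (Ω → M → ℝ) × (M → A → ℝ) => U μ₀ u p.1 p.2 := by
  unfold U
  refine continuous_finset_sum _ fun ω _ => continuous_finset_sum _ fun m _ =>
    continuous_finset_sum _ fun a _ => ?_
  have h1 : Continuous fun p : (Ω → M → ℝ) × (M → A → ℝ) => p.1 ω m :=
    (continuous_apply m).comp ((continuous_apply ω).comp continuous_fst)
  have h2 : Continuous fun p : (Ω → M → ℝ) × (M → A → ℝ) => p.2 m a :=
    (continuous_apply a).comp ((continuous_apply m).comp continuous_snd)
  exact ((continuous_const.mul h1).mul h2).mul continuous_const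


lemma continuous_U_snd (μ₀ : Ω → ℝ) (u : A × Ω → ℝ) (σ' : Ω → M → ℝ) :
    Continuous fun p : (Ω → M → ℝ) × (M → A → ℝ) => U μ₀ u σ' p.2 := by
  unfold U
  refine continuous_finset_sum _ fun ω _ => continuous_finset_sum _ fun m _ =>
    continuous_finset_sum _ fun a _ => ?_
  have h2 : Continuous fun p : (Ω → M → ℝ) × (M → A → ℝ) => p.2 m a :=
    (continuous_apply a).comp ((continuous_apply m).comp continuous_snd)
  exact (continuous_const.mul h2).mul continuous_const

lemma continuous_U_fst (μ₀ : Ω → ℝ) (u : A × Ω → ℝ) (ρ' : M → A → ℝ) :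
    Continuous fun p : (Ω → M → ℝ) × (M → A → ℝ) => U μ₀ u p.1 ρ' := by
  unfold U
  refine continuous_finset_sum _ fun ω _ => continuous_finset_sum _ fun m _ =>
    continuous_finset_sum _ fun a _ => ?_
  have h1 : Continuous fun p : (Ω → M → ℝ) × (M → A → ℝ) => p.1 ω m :=
    (continuous_apply m).comp ((continuous_apply ω).comp continuous_fst)
  exact ((continuous_const.mul h1).mul continuous_const).mul continuous_const

set_option maxHeartbeats 2000000 in
lemma ct_attained (μ₀ : Ω → ℝ) (uS uR : A × Ω → ℝ)
    (hne : ∃ (σ : Ω → M → ℝ) (ρ : M → A → ℝ), CTEq μ₀ uS uR σ ρ) :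
    ∃ (σ : Ω → M → ℝ) (ρ : M → A → ℝ), CTEq μ₀ uS uR σ ρ ∧
      U μ₀ uS σ ρ = ctPayoff (M := M) μ₀ uS uR := by
  classical
  set K : Set ((Ω → M → ℝ) × (M → A → ℝ)) := {p | CTEq μ₀ uS uR p.1 p.2} with hK
  have hcont1 : ∀ (ω : Ω) (m : M), Continuous fun p : (Ω → M → ℝ) × (M → A → ℝ) => p.1 ω m :=
    fun ω m => (continuous_apply m).comp ((continuous_apply ω).comp continuous_fst)
  have hcont2 : ∀ (m : M) (a : A), Continuous fun p : (Ω → M → ℝ) × (M → A → ℝ) => p.2 m a :=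
    fun m a => (continuous_apply a).comp ((continuous_apply m).comp continuous_snd)
  have hKclosed : IsClosed K := by
    have h1 : IsClosed {p : (Ω → M → ℝ) × (M → A → ℝ) | IsMsg p.1} := by
      have e : {p : (Ω → M → ℝ) × (M → A → ℝ) | IsMsg p.1} =
          ⋂ ω, ((⋂ m, {p : (Ω → M → ℝ) × (M → A → ℝ) | 0 ≤ p.1 ω m}) ∩
            {p : (Ω → M → ℝ) × (M → A → ℝ) | ∑ m, p.1 ω m = 1}) := by
        ext p; simp [IsMsg, IsDist, Set.mem_iInter, forall_and]
      rw [e]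
      exact isClosed_iInter fun ω => IsClosed.inter
        (isClosed_iInter fun m => isClosed_le continuous_const (hcont1 ω m))
        (isClosed_eq (continuous_finset_sum _ fun m _ => hcont1 ω m) continuous_const)
    have h2 : IsClosed {p : (Ω → M → ℝ) × (M → A → ℝ) | IsAct p.2} := by
      have e : {p : (Ω → M → ℝ) × (M → A → ℝ) | IsAct p.2} =
          ⋂ m, ((⋂ a, {p : (Ω → M → ℝ) × (M → A → ℝ) | 0 ≤ p.2 m a}) ∩
            {p : (Ω → M → ℝ) × (M → A → ℝ) | ∑ a, p.2 m a = 1}) := by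
        ext p; simp [IsAct, IsDist, Set.mem_iInter, forall_and]
      rw [e]
      exact isClosed_iInter fun m => IsClosed.inter
        (isClosed_iInter fun a => isClosed_le continuous_const (hcont2 m a))
        (isClosed_eq (continuous_finset_sum _ fun a _ => hcont2 m a) continuous_const)
    have h3 : IsClosed {p : (Ω → M → ℝ) × (M → A → ℝ) | SBR μ₀ uS p.1 p.2} := by
      have e : {p : (Ω → M → ℝ) × (M → A → ℝ) | SBR μ₀ uS p.1 p.2} =
          ⋂ σ' : Ω → M → ℝ, {p : (Ω → M → ℝ) × (M → A → ℝ) |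
            IsMsg σ' → U μ₀ uS σ' p.2 ≤ U μ₀ uS p.1 p.2} := by
        ext p; simp only [Set.mem_iInter, Set.mem_setOf_eq]; rfl
      rw [e]
      refine isClosed_iInter fun σ' => ?_
      by_cases h : IsMsg σ'
      · have e2 : {p : (Ω → M → ℝ) × (M → A → ℝ) |
            IsMsg σ' → U μ₀ uS σ' p.2 ≤ U μ₀ uS p.1 p.2}
            = {p : (Ω → M → ℝ) × (M → A → ℝ) | U μ₀ uS σ' p.2 ≤ U μ₀ uS p.1 p.2} := by
          ext p; simp [h]
        rw [e2]
        exact isClosed_le (continuous_U_snd μ₀ uS σ') (continuous_U_full μ₀ uS)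
      · have e2 : {p : (Ω → M → ℝ) × (M → A → ℝ) |
            IsMsg σ' → U μ₀ uS σ' p.2 ≤ U μ₀ uS p.1 p.2} = Set.univ := by
          ext p; simp [h]
        rw [e2]; exact isClosed_univ
    have h4 : IsClosed {p : (Ω → M → ℝ) × (M → A → ℝ) | RBR μ₀ uR p.1 p.2} := by
      have e : {p : (Ω → M → ℝ) × (M → A → ℝ) | RBR μ₀ uR p.1 p.2} =
          ⋂ ρ' : M → A → ℝ, {p : (Ω → M → ℝ) × (M → A → ℝ) |
            IsAct ρ' → U μ₀ uR p.1 ρ' ≤ U μ₀ uR p.1 p.2} := by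
        ext p; simp only [Set.mem_iInter, Set.mem_setOf_eq]; rfl
      rw [e]
      refine isClosed_iInter fun ρ' => ?_
      by_cases h : IsAct ρ'
      · have e2 : {p : (Ω → M → ℝ) × (M → A → ℝ) |
            IsAct ρ' → U μ₀ uR p.1 ρ' ≤ U μ₀ uR p.1 p.2}
            = {p : (Ω → M → ℝ) × (M → A → ℝ) | U μ₀ uR p.1 ρ' ≤ U μ₀ uR p.1 p.2} := by
          ext p; simp [h]
        rw [e2]
        exact isClosed_le (continuous_U_fst μ₀ uR ρ') (continuous_U_full μ₀ uR)
      · have e2 : {p : (Ω → M → ℝ) × (M → A → ℝ) |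
            IsAct ρ' → U μ₀ uR p.1 ρ' ≤ U μ₀ uR p.1 p.2} = Set.univ := by
          ext p; simp [h]
        rw [e2]; exact isClosed_univ
    have e : K = ({p : (Ω → M → ℝ) × (M → A → ℝ) | IsMsg p.1} ∩
        {p | IsAct p.2}) ∩ ({p | SBR μ₀ uS p.1 p.2} ∩ {p | RBR μ₀ uR p.1 p.2}) := by
      ext p
      simp only [hK, Set.mem_inter_iff, Set.mem_setOf_eq, CTEq]
      tauto
    rw [e]
    exact ((h1.inter h2).inter (h3.inter h4))
  have hC : IsCompact ((Set.univ.pi fun _ : Ω => Set.univ.pi fun _ : M => Set.Icc (0:ℝ) 1) ×ˢ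
      (Set.univ.pi fun _ : M => Set.univ.pi fun _ : A => Set.Icc (0:ℝ) 1)) :=
    (isCompact_univ_pi fun _ => isCompact_univ_pi fun _ => isCompact_Icc).prod
      (isCompact_univ_pi fun _ => isCompact_univ_pi fun _ => isCompact_Icc)
  have hsub : K ⊆ (Set.univ.pi fun _ : Ω => Set.univ.pi fun _ : M => Set.Icc (0:ℝ) 1) ×ˢ
      (Set.univ.pi fun _ : M => Set.univ.pi fun _ : A => Set.Icc (0:ℝ) 1) := by
    rintro ⟨σ, ρ⟩ ⟨hσ, hρ, -, -⟩
    constructor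
    · intro ω _
      intro m _
      exact ⟨(hσ ω).1 m, by
        rw [← (hσ ω).2]
        exact Finset.single_le_sum (fun m' _ => (hσ ω).1 m') (Finset.mem_univ m)⟩
    · intro m _
      intro a _
      exact ⟨(hρ m).1 a, by
        rw [← (hρ m).2]
        exact Finset.single_le_sum (fun a' _ => (hρ m).1 a') (Finset.mem_univ a)⟩
  have hKcomp : IsCompact K := hC.of_isClosed_subset hKclosed hsub
  have himg : {x | ∃ (σ : Ω → M → ℝ) (ρ : M → A → ℝ), CTEq μ₀ uS uR σ ρ ∧ x = U μ₀ uS σ ρ}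
      = (fun p : (Ω → M → ℝ) × (M → A → ℝ) => U μ₀ uS p.1 p.2) '' K := by
    ext x; constructor
    · rintro ⟨σ, ρ, h, rfl⟩; exact ⟨(σ, ρ), h, rfl⟩
    · rintro ⟨p, hp, rfl⟩; exact ⟨p.1, p.2, hp, rfl⟩
  have hcompimg : IsCompact {x | ∃ (σ : Ω → M → ℝ) (ρ : M → A → ℝ),
      CTEq μ₀ uS uR σ ρ ∧ x = U μ₀ uS σ ρ} := by
    rw [himg]; exact hKcomp.image (continuous_U_full μ₀ uS)
  have hnex : Set.Nonempty {x | ∃ (σ : Ω → M → ℝ) (ρ : M → A → ℝ),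
      CTEq μ₀ uS uR σ ρ ∧ x = U μ₀ uS σ ρ} := by
    obtain ⟨σ, ρ, h⟩ := hne; exact ⟨_, σ, ρ, h, rfl⟩
  have hmem := hcompimg.sSup_mem hnex
  obtain ⟨σ, ρ, h, hx⟩ := hmem
  exact ⟨σ, ρ, h, hx.symm⟩

end Compact
open Classical in
lemma main_structure (μ₀ : Ω → ℝ) (hμ : IsPrior μ₀) (uS uR : A × Ω → ℝ) (v : A → ℝ)
    (htrans : ∀ a ω, uS (a, ω) = v a)
    (hnodup : ∀ a a' : A, a ≠ a' → v a ≠ v a')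
    (σ : Ω → M → ℝ) (ρ : M → A → ℝ) (hCT : CTEq μ₀ uS uR σ ρ)
    (hmax : ∀ (σ' : Ω → M → ℝ) (ρ' : M → A → ℝ), PersProfile μ₀ uR σ' ρ' →
      U μ₀ uS σ' ρ' ≤ U μ₀ uS σ ρ) :
    ∃ a₀ : A, (∀ b, ∑ ω, μ₀ ω * uR (b, ω) ≤ ∑ ω, μ₀ ω * uR (a₀, ω)) ∧
      v a₀ = U μ₀ uS σ ρ := by
  obtain ⟨hσ, hρ, hS, hR⟩ := hCT
  -- message weights
  have hc0 : ∀ m : M, 0 ≤ ∑ ω, μ₀ ω * σ ω m := fun m =>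
    Finset.sum_nonneg fun ω _ => mul_nonneg (hμ.1 ω).le ((hσ ω).1 m)
  have hc1 : ∑ m, ∑ ω, μ₀ ω * σ ω m = 1 := by
    rw [Finset.sum_comm]
    have h3 : ∀ ω, ∑ m, μ₀ ω * σ ω m = μ₀ ω := fun ω => by
      rw [← Finset.mul_sum, (hσ ω).2, mul_one]
    rw [Finset.sum_congr rfl fun ω _ => h3 ω, hμ.2]
  -- sender indifference across messages
  have hwle : ∀ m : M, ∑ a, ρ m a * v a ≤ U μ₀ uS σ ρ := by
    intro m
    have h := hS (fun _ m' => if m' = m then 1 else 0) (fun _ => delta_isDist m)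
    rwa [U_const_msg μ₀ hμ uS v htrans ρ m] at h
  have hWsum : ∑ m, (∑ ω, μ₀ ω * σ ω m) * (∑ a, ρ m a * v a) = U μ₀ uS σ ρ :=
    (U_msg_form μ₀ uS v htrans σ ρ).symm
  have hwon : ∀ m : M, 0 < ∑ ω, μ₀ ω * σ ω m → ∑ a, ρ m a * v a = U μ₀ uS σ ρ :=
    avg_eq_of_le _ _ _ hc0 hc1 hwle hWsum
  -- receiver best-response structure
  have hrowle : ∀ (m : M) (b : A), ∑ ω, μ₀ ω * σ ω m * uR (b, ω)
      ≤ ∑ a, ρ m a * ∑ ω, μ₀ ω * σ ω m * uR (a, ω) := by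
    intro m b
    have hupd : IsAct (Function.update ρ m fun a => if a = b then (1:ℝ) else 0) := by
      intro m'
      by_cases h : m' = m
      · subst h; rw [Function.update_self]; exact delta_isDist b
      · rw [Function.update_of_ne h]; exact hρ m'
    have h := hR _ hupd
    rw [U_update μ₀ uR σ ρ m] at h
    have he : ∑ a, (if a = b then (1:ℝ) else 0) * ∑ ω, μ₀ ω * σ ω m * uR (a, ω)
        = ∑ ω, μ₀ ω * σ ω m * uR (b, ω) := by simp [ite_mul]
    rw [he] at h
    linarith
  have hsupp : ∀ (m : M) (a : A), 0 < ρ m a →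
      ∑ ω, μ₀ ω * σ ω m * uR (a, ω) = ∑ a', ρ m a' * ∑ ω, μ₀ ω * σ ω m * uR (a', ω) := by
    intro m a ha
    exact avg_eq_of_le (ρ m) (fun a' => ∑ ω, μ₀ ω * σ ω m * uR (a', ω)) _
      (hρ m).1 (hρ m).2 (fun a' => hrowle m a') rfl a ha
  -- purity on path
  have hpure : ∀ m : M, 0 < ∑ ω, μ₀ ω * σ ω m → ∃ a, ρ m a = 1 ∧ v a = U μ₀ uS σ ρ := by
    intro m hcm
    have hsne : (Finset.univ.filter fun a => 0 < ρ m a).Nonempty := by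
      by_contra h
      rw [Finset.not_nonempty_iff_eq_empty, Finset.filter_eq_empty_iff] at h
      have hz : ∀ a : A, ρ m a = 0 := fun a =>
        le_antisymm (not_lt.mp (h (Finset.mem_univ a))) ((hρ m).1 a)
      have := (hρ m).2
      rw [Finset.sum_congr rfl fun a _ => hz a] at this
      simp at this
    obtain ⟨astar, hastar_mem, hastar⟩ := Finset.exists_max_image _ v hsne
    have hastar_pos : 0 < ρ m astar := (Finset.mem_filter.mp hastar_mem).2
    have hone : ρ m astar = 1 := by
      by_contra hne1
      have hlt : ρ m astar < 1 :=
        lt_of_le_of_ne (by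
          rw [← (hρ m).2]
          exact Finset.single_le_sum (fun a _ => (hρ m).1 a) (Finset.mem_univ astar)) hne1
      have hpos : 0 < ∑ a ∈ Finset.univ.erase astar, ρ m a := by
        have h := (hρ m).2
        rw [← Finset.add_sum_erase _ _ (Finset.mem_univ astar)] at h
        linarith
      obtain ⟨b, hbmem, hbpos⟩ : ∃ b ∈ Finset.univ.erase astar, 0 < ρ m b := by
        by_contra h
        push_neg at h
        have : ∑ a ∈ Finset.univ.erase astar, ρ m a ≤ 0 :=
          Finset.sum_nonpos fun a ha => h a ha
        linarith
      have hbne : b ≠ astar := (Finset.mem_erase.mp hbmem).1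
      have hstrict : ∑ a, ρ m a * v a < v astar := by
        have hle : ∀ a ∈ Finset.univ, ρ m a * v a ≤ ρ m a * v astar := by
          intro a _
          rcases lt_or_eq_of_le ((hρ m).1 a) with hpa | hpa
          · exact mul_le_mul_of_nonneg_left
              (hastar a (Finset.mem_filter.mpr ⟨Finset.mem_univ a, hpa⟩)) hpa.le
          · rw [← hpa]; simp
        have hvb : v b < v astar :=
          lt_of_le_of_ne (hastar b (Finset.mem_filter.mpr ⟨Finset.mem_univ b, hbpos⟩))
            (hnodup b astar hbne)
        have hltb : ρ m b * v b < ρ m b * v astar := mul_lt_mul_of_pos_left hvb hbpos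
        have h := Finset.sum_lt_sum hle ⟨b, Finset.mem_univ b, hltb⟩
        calc ∑ a, ρ m a * v a < ∑ a, ρ m a * v astar := h
          _ = v astar := by rw [← Finset.sum_mul, (hρ m).2, one_mul]
      -- improved persuasion profile
      have hupd : IsAct (Function.update ρ m fun a => if a = astar then (1:ℝ) else 0) := by
        intro m'
        by_cases h : m' = m
        · subst h; rw [Function.update_self]; exact delta_isDist astar
        · rw [Function.update_of_ne h]; exact hρ m'
      have hRBR' : RBR μ₀ uR σ (Function.update ρ m fun a => if a = astar then (1:ℝ) else 0) := by
        intro ρ'' hρ''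
        have heq : U μ₀ uR σ (Function.update ρ m fun a => if a = astar then (1:ℝ) else 0)
            = U μ₀ uR σ ρ := by
          rw [U_update μ₀ uR σ ρ m]
          have h1 : ∑ a, (if a = astar then (1:ℝ) else 0) * ∑ ω, μ₀ ω * σ ω m * uR (a, ω)
              = ∑ ω, μ₀ ω * σ ω m * uR (astar, ω) := by simp [ite_mul]
          rw [h1, hsupp m astar hastar_pos]
          ring
        rw [heq]; exact hR ρ'' hρ''
      have hga : ∀ a : A, ∑ ω, μ₀ ω * σ ω m * uS (a, ω) = (∑ ω, μ₀ ω * σ ω m) * v a := by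
        intro a
        rw [Finset.sum_mul]
        exact Finset.sum_congr rfl fun ω _ => by rw [htrans]
      have hUp : U μ₀ uS σ (Function.update ρ m fun a => if a = astar then (1:ℝ) else 0)
          = U μ₀ uS σ ρ + (∑ ω, μ₀ ω * σ ω m) * (v astar - ∑ a, ρ m a * v a) := by
        rw [U_update μ₀ uS σ ρ m]
        simp only [hga]
        have h1 : ∑ a, (if a = astar then (1:ℝ) else 0) * ((∑ ω, μ₀ ω * σ ω m) * v a)
            = (∑ ω, μ₀ ω * σ ω m) * v astar := by simp [ite_mul]
        have h2 : ∑ a, ρ m a * ((∑ ω, μ₀ ω * σ ω m) * v a)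
            = (∑ ω, μ₀ ω * σ ω m) * ∑ a, ρ m a * v a := by
          rw [Finset.mul_sum]
          exact Finset.sum_congr rfl fun a _ => by ring
        rw [h1, h2]; ring
      have hgain : U μ₀ uS σ ρ
          < U μ₀ uS σ (Function.update ρ m fun a => if a = astar then (1:ℝ) else 0) := by
        rw [hUp]
        have hp : 0 < (∑ ω, μ₀ ω * σ ω m) * (v astar - ∑ a, ρ m a * v a) :=
          mul_pos hcm (by linarith)
        linarith
      have := hmax σ _ ⟨hσ, hupd, hRBR'⟩
      linarith
    refine ⟨astar, hone, ?_⟩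
    have hwm : ∑ a, ρ m a * v a = v astar := by
      rw [Finset.sum_eq_single astar]
      · rw [hone, one_mul]
      · intro b _ hb
        rw [dist_eq_zero_of_ne (hρ m) hone hb, zero_mul]
      · intro h; exact absurd (Finset.mem_univ astar) h
    rw [← hwm]
    exact hwon m hcm
  -- pick an on-path message
  obtain ⟨mbar, hmbar⟩ : ∃ m : M, 0 < ∑ ω, μ₀ ω * σ ω m := by
    by_contra h
    push_neg at h
    have : (1:ℝ) ≤ 0 := hc1 ▸ Finset.sum_nonpos fun m _ => h m
    linarith
  obtain ⟨a₀, ha₀1, ha₀v⟩ := hpure mbar hmbar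
  have hall : ∀ m : M, 0 < ∑ ω, μ₀ ω * σ ω m → ρ m a₀ = 1 := by
    intro m hm
    obtain ⟨am, ham1, hamv⟩ := hpure m hm
    have heq : am = a₀ := by
      by_contra hne
      exact hnodup am a₀ hne (hamv.trans ha₀v.symm)
    rwa [heq] at ham1
  -- off-path messages are never sent
  have hoff : ∀ m : M, ¬(0 < ∑ ω, μ₀ ω * σ ω m) → ∀ ω, σ ω m = 0 := by
    intro m hm ω
    have hcz : ∑ ω, μ₀ ω * σ ω m = 0 := le_antisymm (not_lt.mp hm) (hc0 m)
    have h := (Finset.sum_eq_zero_iff_of_nonneg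
      (fun ω' _ => mul_nonneg (hμ.1 ω').le ((hσ ω').1 m))).mp hcz ω (Finset.mem_univ ω)
    exact (mul_eq_zero.mp h).resolve_left (ne_of_gt (hμ.1 ω))
  -- receiver's payoff equals prior payoff of a₀
  have hUReq : U μ₀ uR σ ρ = ∑ ω, μ₀ ω * uR (a₀, ω) := by
    rw [U_g_form]
    have hrows : ∀ m : M, ∑ a, ρ m a * ∑ ω, μ₀ ω * σ ω m * uR (a, ω)
        = ∑ ω, μ₀ ω * σ ω m * uR (a₀, ω) := by
      intro m
      by_cases hm : 0 < ∑ ω, μ₀ ω * σ ω m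
      · have h1 := hall m hm
        rw [Finset.sum_eq_single a₀]
        · rw [h1, one_mul]
        · intro b _ hb
          rw [dist_eq_zero_of_ne (hρ m) h1 hb, zero_mul]
        · intro h; exact absurd (Finset.mem_univ a₀) h
      · have hz := hoff m hm
        have hza : ∀ a : A, ∑ ω, μ₀ ω * σ ω m * uR (a, ω) = 0 := fun a =>
          Finset.sum_eq_zero fun ω _ => by rw [hz ω]; ring
        rw [hza a₀]
        exact Finset.sum_eq_zero fun a _ => by rw [hza a]; ring
    rw [Finset.sum_congr rfl fun m _ => hrows m, Finset.sum_comm]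
    refine Finset.sum_congr rfl fun ω _ => ?_
    have h5 : ∀ m : M, μ₀ ω * σ ω m * uR (a₀, ω) = (μ₀ ω * uR (a₀, ω)) * σ ω m :=
      fun m => by ring
    rw [Finset.sum_congr rfl fun m _ => h5 m, ← Finset.mul_sum, (hσ ω).2, mul_one]
  refine ⟨a₀, ?_, ha₀v⟩
  intro b
  have h := hR (fun _ a => if a = b then (1:ℝ) else 0) (fun _ => delta_isDist b)
  rw [hUReq] at h
  have hUb : U μ₀ uR σ (fun _ a => if a = b then (1:ℝ) else 0) = ∑ ω, μ₀ ω * uR (b, ω) := by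
    rw [U_g_form]
    have h1 : ∀ m : M, (∑ a, (if a = b then (1:ℝ) else 0) * ∑ ω, μ₀ ω * σ ω m * uR (a, ω))
        = ∑ ω, μ₀ ω * σ ω m * uR (b, ω) := by
      intro m; simp [ite_mul]
    rw [Finset.sum_congr rfl fun m _ => h1 m, Finset.sum_comm]
    refine Finset.sum_congr rfl fun ω _ => ?_
    have h5 : ∀ m : M, μ₀ ω * σ ω m * uR (b, ω) = (μ₀ ω * uR (b, ω)) * σ ω m :=
      fun m => by ring
    rw [Finset.sum_congr rfl fun m _ => h5 m, ← Finset.mul_sum, (hσ ω).2, mul_one]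
  rwa [hUb] at h
/-- Lemma (Kamenica–Lin): in a no-duplicate-actions transparent environment, if
commitment has no value then there is a simple babbling cheap-talk equilibrium
attaining the persuasion payoff. -/
theorem transparent_no_value_implies_simple_babbling
    (Ω A M : Type) [Fintype Ω] [Fintype A] [Fintype M]
    [Nonempty Ω] [Nonempty A]
    (hM : max (Fintype.card Ω) (Fintype.card A) < Fintype.card M)
    (μ₀ : Ω → ℝ) (hμ : IsPrior μ₀)
    (uS uR : A × Ω → ℝ)
    (huS : ∀ p, uS p ∈ Set.Icc (0 : ℝ) 1) (huR : ∀ p, uR p ∈ Set.Icc (0 : ℝ) 1)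
    (v : A → ℝ) (htrans : ∀ (a : A) (ω : Ω), uS (a, ω) = v a)
    (hnodup : ∀ a a' : A, a ≠ a' → v a ≠ v a')
    (hnoval : ¬ (ctPayoff (M := M) μ₀ uS uR < persPayoff (M := M) μ₀ uS uR)) :
    ∃ (σ : Ω → M → ℝ) (ρ : M → A → ℝ),
      CTEq μ₀ uS uR σ ρ ∧
      (∃! m : M, OnPath σ m) ∧
      (∃ a₀ : A, ∀ m : M, ρ m a₀ = 1) ∧
      U μ₀ uS σ ρ = persPayoff (M := M) μ₀ uS uR := by
  classical
  have hMpos : 0 < Fintype.card M := lt_of_le_of_lt (Nat.zero_le _) hM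
  have hMne : Nonempty M := Fintype.card_pos_iff.mp hMpos
  obtain ⟨m₀⟩ := hMne
  -- a receiver-optimal action under the prior
  obtain ⟨abar, -, habar⟩ := Finset.exists_max_image Finset.univ
    (fun a : A => ∑ ω, μ₀ ω * uR (a, ω)) ⟨Classical.arbitrary A, Finset.mem_univ _⟩
  have habar' : ∀ b, ∑ ω, μ₀ ω * uR (b, ω) ≤ ∑ ω, μ₀ ω * uR (abar, ω) :=
    fun b => habar b (Finset.mem_univ b)
  obtain ⟨hbabCT, -⟩ := babbling_profile (M := M) μ₀ hμ uS uR v htrans abar habar' m₀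
  -- basic payoff-set facts
  have hbddp : BddAbove {x | ∃ (σ : Ω → M → ℝ) (ρ : M → A → ℝ),
      PersProfile μ₀ uR σ ρ ∧ x = U μ₀ uS σ ρ} := by
    refine ⟨1, ?_⟩
    rintro x ⟨σ, ρ, ⟨h1, h2, h3⟩, rfl⟩
    exact U_le_one μ₀ hμ uS huS h1 h2
  have hsub : {x | ∃ (σ : Ω → M → ℝ) (ρ : M → A → ℝ), CTEq μ₀ uS uR σ ρ ∧ x = U μ₀ uS σ ρ}
      ⊆ {x | ∃ (σ : Ω → M → ℝ) (ρ : M → A → ℝ), PersProfile μ₀ uR σ ρ ∧ x = U μ₀ uS σ ρ} := by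
    rintro x ⟨σ, ρ, ⟨h1, h2, h3, h4⟩, rfl⟩
    exact ⟨σ, ρ, ⟨h1, h2, h4⟩, rfl⟩
  have hnect : Set.Nonempty {x | ∃ (σ : Ω → M → ℝ) (ρ : M → A → ℝ),
      CTEq μ₀ uS uR σ ρ ∧ x = U μ₀ uS σ ρ} := ⟨_, _, _, hbabCT, rfl⟩
  have hctle : ctPayoff (M := M) μ₀ uS uR ≤ persPayoff (M := M) μ₀ uS uR :=
    csSup_le_csSup hbddp hnect hsub
  have hWeq : persPayoff (M := M) μ₀ uS uR = ctPayoff (M := M) μ₀ uS uR :=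
    le_antisymm (not_lt.mp hnoval) hctle
  -- an optimal cheap-talk equilibrium
  obtain ⟨σ, ρ, hCT, hUW⟩ := ct_attained μ₀ uS uR ⟨_, _, hbabCT⟩
  have hmax : ∀ (σ' : Ω → M → ℝ) (ρ' : M → A → ℝ), PersProfile μ₀ uR σ' ρ' →
      U μ₀ uS σ' ρ' ≤ U μ₀ uS σ ρ := by
    intro σ' ρ' hp
    have hx : U μ₀ uS σ' ρ' ∈ {x | ∃ (σ'' : Ω → M → ℝ) (ρ'' : M → A → ℝ),
        PersProfile μ₀ uR σ'' ρ'' ∧ x = U μ₀ uS σ'' ρ''} := ⟨σ', ρ', hp, rfl⟩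
    have h := le_csSup hbddp hx
    calc U μ₀ uS σ' ρ' ≤ persPayoff (M := M) μ₀ uS uR := h
      _ = ctPayoff (M := M) μ₀ uS uR := hWeq
      _ = U μ₀ uS σ ρ := hUW.symm
  obtain ⟨a₀, hprior, ha₀v⟩ := main_structure μ₀ hμ uS uR v htrans hnodup σ ρ hCT hmax
  -- the simple babbling equilibrium at a₀
  obtain ⟨hbab, hbabU⟩ := babbling_profile (M := M) μ₀ hμ uS uR v htrans a₀ hprior m₀
  refine ⟨_, _, hbab, ?_, ⟨a₀, fun m => by simp⟩, ?_⟩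
  · refine ⟨m₀, ⟨Classical.arbitrary Ω, by simp⟩, ?_⟩
    rintro m' ⟨ω, hω⟩
    by_contra hne
    simp [hne] at hω
  · rw [hbabU, ha₀v, hUW, ← hWeq]

end KL
end
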